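/- The standard α-Hölder triangle T_α = {(x,y) ∈ ℝ² : 0 ≤ x ≤ 1, 0 ≤ y ≤ x^α}, for α ≥ 1, is Lipschitz normally embedded: there is a constant C ≥ 1 such that for all p, q ∈ T_α, the inner distance in T_α between p and q is at most C·‖p − q‖. -/

import Mathlib

/-!
Between `p` and `q` take the staircase `p → (p₀, m) → (q₀, m) → q` with `m = min p₁ q₁`.
Its vertical legs lie in `T_α` trivially, and the horizontal leg at height `m` does because
`m ≤ min(p₀, q₀)^α` and `t ↦ t^α` is monotone. Its length is `|p₀ - q₀| + |p₁ - q₁| ≤ 2‖p - q‖`.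
-/

/-- The inner (length) distance on a subset `X ⊆ ℝⁿ`. -/
noncomputable def innerDist {n : ℕ} (X : Set (EuclideanSpace ℝ (Fin n)))
    (x y : EuclideanSpace ℝ (Fin n)) : ENNReal :=
  ⨅ γ : {γ : ℝ → EuclideanSpace ℝ (Fin n) //
      γ 0 = x ∧ γ 1 = y ∧ ContinuousOn γ (Set.Icc 0 1) ∧ ∀ t ∈ Set.Icc (0:ℝ) 1, γ t ∈ X},
    eVariationOn γ.1 (Set.Icc 0 1)

/-- The standard `α`-Hölder triangle `T_α = {(x,y) : 0 ≤ x ≤ 1, 0 ≤ y ≤ x^α}` in `ℝ²`. -/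
def holderTriangle (α : ℝ) : Set (EuclideanSpace ℝ (Fin 2)) :=
  {p | 0 ≤ p 0 ∧ p 0 ≤ 1 ∧ 0 ≤ p 1 ∧ p 1 ≤ p 0 ^ α}

open Set NNReal

section PathConcat

variable {E : Type*}

noncomputable def pathConcat (γ₁ γ₂ : ℝ → E) (t : ℝ) : E :=
  if t ≤ 1 / 2 then γ₁ (2 * t) else γ₂ (2 * t - 1)

lemma pathConcat_zero (γ₁ γ₂ : ℝ → E) : pathConcat γ₁ γ₂ 0 = γ₁ 0 := by
  simp [pathConcat]

lemma pathConcat_one (γ₁ γ₂ : ℝ → E) : pathConcat γ₁ γ₂ 1 = γ₂ 1 := by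
  norm_num [pathConcat]

lemma mapsTo_two_mul_Icc : MapsTo (fun t : ℝ => 2 * t) (Icc 0 (1 / 2)) (Icc 0 1) :=
  fun t ⟨h0, h1⟩ => ⟨by linarith, by linarith⟩

lemma mapsTo_two_mul_sub_one_Icc : MapsTo (fun t : ℝ => 2 * t - 1) (Icc (1 / 2) 1) (Icc 0 1) :=
  fun t ⟨h0, h1⟩ => ⟨by linarith, by linarith⟩

lemma eqOn_pathConcat_left (γ₁ γ₂ : ℝ → E) :
    EqOn (pathConcat γ₁ γ₂) (γ₁ ∘ fun t => 2 * t) (Icc 0 (1 / 2)) :=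
  fun _ ht => if_pos ht.2

lemma eqOn_pathConcat_right {γ₁ γ₂ : ℝ → E} (h : γ₁ 1 = γ₂ 0) :
    EqOn (pathConcat γ₁ γ₂) (γ₂ ∘ fun t => 2 * t - 1) (Icc (1 / 2) 1) := by
  intro t ht
  rcases ht.1.eq_or_lt with rfl | hlt
  · norm_num [pathConcat, h]
  · exact if_neg (not_le.2 hlt)

lemma mapsTo_pathConcat {γ₁ γ₂ : ℝ → E} {X : Set E} (h₁ : MapsTo γ₁ (Icc 0 1) X)
    (h₂ : MapsTo γ₂ (Icc 0 1) X) : MapsTo (pathConcat γ₁ γ₂) (Icc 0 1) X := by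
  intro t ⟨h0, h1⟩
  unfold pathConcat
  split_ifs with ht
  · exact h₁ (mapsTo_two_mul_Icc ⟨h0, ht⟩)
  · exact h₂ (mapsTo_two_mul_sub_one_Icc ⟨(not_le.1 ht).le, h1⟩)

variable [TopologicalSpace E]

lemma ContinuousOn.pathConcat {γ₁ γ₂ : ℝ → E} (h₁ : ContinuousOn γ₁ (Icc 0 1))
    (h₂ : ContinuousOn γ₂ (Icc 0 1)) (h : γ₁ 1 = γ₂ 0) :
    ContinuousOn (pathConcat γ₁ γ₂) (Icc 0 1) := by
  rw [← Icc_union_Icc_eq_Icc (by norm_num : (0 : ℝ) ≤ 1 / 2) (by norm_num)]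
  refine ContinuousOn.union_of_isClosed ?_ ?_ isClosed_Icc isClosed_Icc
  · exact (h₁.comp (by fun_prop) mapsTo_two_mul_Icc).congr (eqOn_pathConcat_left γ₁ γ₂)
  · exact (h₂.comp (by fun_prop) mapsTo_two_mul_sub_one_Icc).congr (eqOn_pathConcat_right h)

end PathConcat

lemma eVariationOn_pathConcat_le {E : Type*} [PseudoEMetricSpace E] {γ₁ γ₂ : ℝ → E} (h : γ₁ 1 = γ₂ 0) :
    eVariationOn (pathConcat γ₁ γ₂) (Icc 0 1) ≤
      eVariationOn γ₁ (Icc 0 1) + eVariationOn γ₂ (Icc 0 1) := by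
  have hsplit := eVariationOn.Icc_add_Icc (pathConcat γ₁ γ₂) (s := univ)
    (a := 0) (c := 1) (by norm_num : (0 : ℝ) ≤ 1 / 2) (by norm_num) (mem_univ _)
  simp only [univ_inter] at hsplit
  rw [← hsplit, eVariationOn.eq_of_eqOn (eqOn_pathConcat_left γ₁ γ₂),
    eVariationOn.eq_of_eqOn (eqOn_pathConcat_right h)]
  gcongr
  · exact eVariationOn.comp_le_of_monotoneOn _ _
      (fun a _ b _ hab => by linarith) mapsTo_two_mul_Icc
  · exact eVariationOn.comp_le_of_monotoneOn _ _
      (fun a _ b _ hab => by linarith) mapsTo_two_mul_sub_one_Icc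

section InnerDist

variable {n : ℕ} {X : Set (EuclideanSpace ℝ (Fin n))} {x y z : EuclideanSpace ℝ (Fin n)}

theorem innerDist_triangle : innerDist X x z ≤ innerDist X x y + innerDist X y z := by
  refine ENNReal.le_iInf_add_iInf fun ⟨γ₁, h₁0, h₁1, h₁c, h₁X⟩ ⟨γ₂, h₂0, h₂1, h₂c, h₂X⟩ => ?_
  have hjoin : γ₁ 1 = γ₂ 0 := h₁1.trans h₂0.symm
  exact iInf_le_of_le ⟨pathConcat γ₁ γ₂, (pathConcat_zero γ₁ γ₂).trans h₁0,
    (pathConcat_one γ₁ γ₂).trans h₂1, h₁c.pathConcat h₂c hjoin, mapsTo_pathConcat h₁X h₂X⟩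
    (eVariationOn_pathConcat_le hjoin)

theorem innerDist_le_of_lipschitzOnWith {γ : ℝ → EuclideanSpace ℝ (Fin n)} {K : ℝ≥0}
    (hγ : LipschitzOnWith K γ (Icc 0 1)) (h0 : γ 0 = x) (h1 : γ 1 = y)
    (hX : MapsTo γ (Icc 0 1) X) : innerDist X x y ≤ K := by
  refine iInf_le_of_le ⟨γ, h0, h1, hγ.continuousOn, hX⟩ ?_
  calc eVariationOn γ (Icc 0 1) = eVariationOn (γ ∘ id) (Icc 0 1) := rfl
    _ ≤ K * eVariationOn id (Icc (0 : ℝ) 1) := hγ.comp_eVariationOn_le (mapsTo_id _)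
    _ ≤ K := mul_le_of_le_one_right' (by simp)

theorem innerDist_le_edist_of_segment_subset (h : segment ℝ x y ⊆ X) :
    innerDist X x y ≤ edist x y := by
  rw [edist_nndist]
  refine innerDist_le_of_lipschitzOnWith (γ := AffineMap.lineMap x y) ?_
    (AffineMap.lineMap_apply_zero x y) (AffineMap.lineMap_apply_one x y) ?_
  · refine (LipschitzWith.of_dist_le_mul fun s t => ?_).lipschitzOnWith
    rw [dist_lineMap_lineMap, coe_nndist, mul_comm]
  · rw [segment_eq_image_lineMap] at h
    exact (mapsTo_image _ _).mono_right h

end InnerDist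

lemma EuclideanSpace.apply_mem_uIcc_of_mem_segment {ι : Type*} {a b z : EuclideanSpace ℝ ι}
    (hz : z ∈ segment ℝ a b) (i : ι) : z i ∈ uIcc (a i) (b i) := by
  obtain ⟨s, t, hs, ht, hst, rfl⟩ := hz
  rw [← segment_eq_uIcc]
  exact ⟨s, t, hs, ht, hst, by simp⟩

lemma EuclideanSpace.dist_le_abs_add_abs (x y : EuclideanSpace ℝ (Fin 2)) :
    dist x y ≤ |x 0 - y 0| + |x 1 - y 1| := by
  rw [EuclideanSpace.dist_eq, Fin.sum_univ_two, Real.dist_eq, Real.dist_eq, sq_abs, sq_abs]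
  refine Real.sqrt_le_iff.2 ⟨by positivity, ?_⟩
  nlinarith [abs_nonneg (x 0 - y 0), abs_nonneg (x 1 - y 1), sq_abs (x 0 - y 0),
    sq_abs (x 1 - y 1)]

section HolderTriangle

variable {α : ℝ} {p q : EuclideanSpace ℝ (Fin 2)}

lemma segment_subset_holderTriangle_of_apply_zero_eq (hp : p ∈ holderTriangle α)
    (hq : q ∈ holderTriangle α) (h : p 0 = q 0) : segment ℝ p q ⊆ holderTriangle α := by
  intro z hz
  have hz0 := EuclideanSpace.apply_mem_uIcc_of_mem_segment hz 0
  have hz1 := EuclideanSpace.apply_mem_uIcc_of_mem_segment hz 1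
  rw [h, uIcc_self, mem_singleton_iff] at hz0
  obtain ⟨-, -, hp1, hpα⟩ := hp
  obtain ⟨hq0, hq0', hq1, hqα⟩ := hq
  rw [h] at hpα
  refine ⟨hz0 ▸ hq0, hz0 ▸ hq0', ?_, hz0 ▸ ?_⟩ <;> rcases mem_uIcc.1 hz1 with ⟨_, _⟩ | ⟨_, _⟩ <;>
    linarith

lemma segment_subset_holderTriangle_of_apply_one_eq (hα : 0 ≤ α) (hp : p ∈ holderTriangle α)
    (hq : q ∈ holderTriangle α) (h : p 1 = q 1) : segment ℝ p q ⊆ holderTriangle α := by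
  intro z hz
  have hz0 := EuclideanSpace.apply_mem_uIcc_of_mem_segment hz 0
  have hz1 := EuclideanSpace.apply_mem_uIcc_of_mem_segment hz 1
  rw [← h, uIcc_self, mem_singleton_iff] at hz1
  obtain ⟨hp0, hp0', hp1, hpα⟩ := hp
  obtain ⟨hq0, hq0', -, hqα⟩ := hq
  rcases mem_uIcc.1 hz0 with ⟨hpz, hzq⟩ | ⟨hqz, hzp⟩
  · exact ⟨by linarith, by linarith, hz1 ▸ hp1, hz1 ▸ hpα.trans (Real.rpow_le_rpow hp0 hpz hα)⟩
  · exact ⟨by linarith, by linarith, hz1 ▸ hp1,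
      hz1 ▸ h ▸ hqα.trans (Real.rpow_le_rpow hq0 hqz hα)⟩

theorem innerDist_holderTriangle_le (hα : 0 ≤ α) (hp : p ∈ holderTriangle α)
    (hq : q ∈ holderTriangle α) :
    innerDist (holderTriangle α) p q ≤ ENNReal.ofReal (|p 0 - q 0| + |p 1 - q 1|) := by
  set m := min (p 1) (q 1)
  have hmp : m ≤ p 1 := min_le_left _ _
  have hmq : m ≤ q 1 := min_le_right _ _
  have hm : 0 ≤ m := le_min hp.2.2.1 hq.2.2.1
  set r : EuclideanSpace ℝ (Fin 2) := !₂[p 0, m]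
  set s : EuclideanSpace ℝ (Fin 2) := !₂[q 0, m]
  have hr : r ∈ holderTriangle α := by
    simpa [r] using ⟨hp.1, hp.2.1, hm, hmp.trans hp.2.2.2⟩
  have hs : s ∈ holderTriangle α := by
    simpa [s] using ⟨hq.1, hq.2.1, hm, hmq.trans hq.2.2.2⟩
  have hpr : dist p r ≤ p 1 - m := by
    simpa [r, abs_of_nonneg (sub_nonneg.2 hmp)] using EuclideanSpace.dist_le_abs_add_abs p r
  have hrs : dist r s ≤ |p 0 - q 0| := by
    simpa [r, s] using EuclideanSpace.dist_le_abs_add_abs r s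
  have hsq : dist s q ≤ q 1 - m := by
    simpa [s, abs_of_nonpos (sub_nonpos.2 hmq)] using EuclideanSpace.dist_le_abs_add_abs s q
  have hlegs : p 1 - m + (q 1 - m) = |p 1 - q 1| := by
    rw [← max_sub_min_eq_abs']
    linarith [min_add_max (p 1) (q 1)]
  calc innerDist (holderTriangle α) p q
      ≤ innerDist (holderTriangle α) p r + innerDist (holderTriangle α) r s
          + innerDist (holderTriangle α) s q :=
        innerDist_triangle.trans (by gcongr; exact innerDist_triangle)
    _ ≤ edist p r + edist r s + edist s q := by
        gcongr <;> apply innerDist_le_edist_of_segment_subset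
        · exact segment_subset_holderTriangle_of_apply_zero_eq hp hr (by simp [r])
        · exact segment_subset_holderTriangle_of_apply_one_eq hα hr hs (by simp [r, s])
        · exact segment_subset_holderTriangle_of_apply_zero_eq hs hq (by simp [s])
    _ = ENNReal.ofReal (dist p r + dist r s + dist s q) := by
        rw [ENNReal.ofReal_add (by positivity) dist_nonneg,
          ENNReal.ofReal_add dist_nonneg dist_nonneg, edist_dist, edist_dist, edist_dist]
    _ ≤ ENNReal.ofReal (|p 0 - q 0| + |p 1 - q 1|) :=
        ENNReal.ofReal_le_ofReal (by linarith)

end HolderTriangle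

/-- The standard `α`-Hölder triangle, `α ≥ 1`, is Lipschitz normally embedded:
there is `C ≥ 1` with `d_inn(p,q) ≤ C‖p − q‖` for all `p, q ∈ T_α`. -/
theorem holderTriangle_isLNE (α : ℝ) (hα : 1 ≤ α) :
    ∃ C : ℝ, 1 ≤ C ∧ ∀ p ∈ holderTriangle α, ∀ q ∈ holderTriangle α,
      innerDist (holderTriangle α) p q ≤ ENNReal.ofReal (C * ‖p - q‖) := by
  refine ⟨2, one_le_two, fun p hp q hq => ?_⟩
  have h0 := PiLp.dist_apply_le p q 0
  have h1 := PiLp.dist_apply_le p q 1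
  rw [Real.dist_eq] at h0 h1
  refine (innerDist_holderTriangle_le (by linarith) hp hq).trans (ENNReal.ofReal_le_ofReal ?_)
  rw [← dist_eq_norm]
  linarith
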